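/- For every real λ with |λ| > 2, one has λ²/4 − ∫_{−2}^{2} log|λ − s| · (1/(2π))√(4 − s²) ds = (1/2)V(λ) + 1/2, where V(λ) = ∫₀^{|λ|} √(max(s²−4,0)) ds; in particular the left-hand side exceeds the constant value 1/2 attained on [−2,2]. -/

import Mathlib

open Real Filter Set MeasureTheory intervalIntegral
open scoped Topology

/-!
For `x > 2` let `U x = ∫ log (x - s) dμ(s)` be the logarithmic potential of the semicircle
law `μ`. Differentiating under the integral, `U'` is the Stieltjes transform of `μ`, which an
explicit antiderivative evaluates to `(x - √(x² - 4)) / 2`. As `V' x = √(x² - 4)`, the function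
`x² / 4 - U x - V x / 2` has zero derivative on `(2, ∞)`, so it equals its limit at infinity.
That limit is `1 / 2`: `U x - log x → 0` since `μ` has mass one, and
`x² / 4 - V x / 2 - log x → 1 / 2` by the closed form of `V`. Both sides are even in `λ`, and
`V > 0` off `[-2, 2]`.
-/

/-- The GUE effective potential `V(λ) = ∫₀^{|λ|} √(max(s²−4,0)) ds`. -/
noncomputable def V (l : ℝ) : ℝ := ∫ s in (0 : ℝ)..|l|, Real.sqrt (max (s ^ 2 - 4) 0)

lemma eq_of_hasDerivAt_zero_of_tendsto_atTop {f : ℝ → ℝ} {a c x : ℝ}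
    (hf : ∀ y ∈ Ioi a, HasDerivAt f 0 y) (hlim : Tendsto f atTop (𝓝 c)) (hx : a < x) :
    f x = c := by
  have hconst : ∀ y ∈ Ioi a, f y = f x := fun y hy =>
    isOpen_Ioi.is_const_of_deriv_eq_zero isPreconnected_Ioi
      (fun z hz => (hf z hz).differentiableAt.differentiableWithinAt)
      (fun z hz => (hf z hz).deriv) hy hx
  refine tendsto_nhds_unique (tendsto_const_nhds.congr' ?_) hlim
  filter_upwards [eventually_gt_atTop a] with y hy using (hconst y hy).symm

lemma abs_log_one_sub_le {t : ℝ} (ht : |t| ≤ 1 / 2) : |log (1 - t)| ≤ 2 * |t| := by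
  have h := abs_log_sub_add_sum_range_le (ht.trans_lt (by norm_num)) 0
  simp only [Finset.range_zero, Finset.sum_empty, zero_add, pow_one] at h
  calc |log (1 - t)| ≤ |t| / (1 - |t|) := h
    _ ≤ |t| / (1 / 2) := by gcongr; linarith
    _ = 2 * |t| := by ring

section LogPotential

variable {a b : ℝ} {w : ℝ → ℝ}

lemma intervalIntegrable_log_sub_mul (hw : IntervalIntegrable w volume a b) (hab : a ≤ b)
    {x : ℝ} (hx : b < x) : IntervalIntegrable (fun s => log (x - s) * w s) volume a b := by
  refine hw.continuousOn_mul (ContinuousOn.log (by fun_prop) fun s hs => ?_)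
  rw [uIcc_of_le hab] at hs
  linarith [hs.2]

theorem hasDerivAt_integral_log_sub_mul (hw : IntervalIntegrable w volume a b) (hab : a ≤ b)
    {x : ℝ} (hx : b < x) :
    HasDerivAt (fun y => ∫ s in a..b, log (y - s) * w s) (∫ s in a..b, w s / (x - s)) x := by
  set ε := (x - b) / 2 with hε_def
  have hε : 0 < ε := by positivity
  have hgap : ∀ y ∈ Metric.ball x ε, ∀ s ∈ uIoc a b, ε < y - s := by
    intro y hy s hs
    rw [uIoc_of_le hab] at hs
    rw [Metric.mem_ball, Real.dist_eq, abs_lt] at hy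
    linarith [hs.2, hy.1, hε_def]
  refine (hasDerivAt_integral_of_dominated_loc_of_deriv_le
    (F := fun y s => log (y - s) * w s) (F' := fun y s => w s / (y - s))
    (bound := fun s => |w s| / ε)
    (Metric.ball_mem_nhds x hε) (Eventually.of_forall fun y => ?_)
    (intervalIntegrable_log_sub_mul hw hab hx) ?_ ?_ (hw.abs.div_const ε) ?_).2
  · exact (by fun_prop : Measurable fun s => log (y - s)).aestronglyMeasurable.mul
      hw.def'.aestronglyMeasurable
  · exact (hw.def'.aemeasurable.div
      (by fun_prop : Measurable fun s => x - s).aemeasurable).aestronglyMeasurable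
  · refine Eventually.of_forall fun s hs y hy => ?_
    have hys := hgap y hy s hs
    rw [norm_div, Real.norm_eq_abs, Real.norm_eq_abs, abs_of_pos (hε.trans hys)]
    exact div_le_div_of_nonneg_left (abs_nonneg _) hε hys.le
  · refine Eventually.of_forall fun s hs y hy => ?_
    have hys := hε.trans (hgap y hy s hs)
    exact ((((hasDerivAt_id y).sub_const s).log hys.ne').mul_const (w s)).congr_deriv
      (by simp [div_eq_inv_mul])

theorem tendsto_integral_log_sub_mul_sub_log (hw : IntervalIntegrable w volume a b)
    (hab : a ≤ b) :
    Tendsto (fun x => (∫ s in a..b, log (x - s) * w s) - (∫ s in a..b, w s) * log x)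
      atTop (𝓝 0) := by
  set c := max |a| |b|
  have hc : ∀ s ∈ Ioc a b, |s| ≤ c := fun s hs =>
    abs_le.2 ⟨by linarith [le_max_left |a| |b|, neg_abs_le a, hs.1],
      by linarith [le_max_right |a| |b|, le_abs_self b, hs.2]⟩
  have hK : Tendsto (fun x : ℝ => 2 * c / x * ∫ s in a..b, |w s|) atTop (𝓝 0) := by
    simpa using (tendsto_const_nhds.div_atTop tendsto_id).mul_const (∫ s in a..b, |w s|)
  refine squeeze_zero_norm' ?_ hK
  filter_upwards [eventually_gt_atTop (2 * c), eventually_gt_atTop 0] with x hxc hx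
  have hlog : ∀ s ∈ Ioc a b, log (x - s) - log x = log (1 - s / x) := fun s hs => by
    have : 0 < x - s := by linarith [le_abs_self s, hc s hs]
    rw [← log_div this.ne' hx.ne', sub_div, div_self hx.ne']
  have hxb : b < x := by linarith [le_abs_self b, le_max_right |a| |b|]
  rw [mul_comm, ← intervalIntegral.integral_const_mul, ← integral_sub
    (intervalIntegrable_log_sub_mul hw hab hxb) (hw.const_mul _),
    ← intervalIntegral.integral_const_mul]
  refine norm_integral_le_of_norm_le hab (Eventually.of_forall fun s hs => ?_)
    (hw.abs.const_mul _)
  have hsx : |s / x| ≤ 1 / 2 := by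
    rw [abs_div, abs_of_pos hx, div_le_iff₀ hx]; linarith [hc s hs]
  calc ‖log (x - s) * w s - log x * w s‖ = |log (1 - s / x)| * |w s| := by
        rw [← sub_mul, hlog s hs, norm_mul, Real.norm_eq_abs, Real.norm_eq_abs]
    _ ≤ 2 * |s / x| * |w s| := by gcongr; exact abs_log_one_sub_le hsx
    _ ≤ 2 * c / x * |w s| := by
        gcongr
        rw [abs_div, abs_of_pos hx, mul_div_assoc]
        gcongr
        exact hc s hs

end LogPotential

theorem integral_sqrt_four_sub_sq : ∫ s in (-2 : ℝ)..2, √(4 - s ^ 2) = 2 * π := by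
  have hscale := integral_comp_mul_left (a := -1) (b := 1) (fun s => √(4 - s ^ 2))
    (two_ne_zero' ℝ)
  have hsqrt : ∀ x : ℝ, √(4 - (2 * x) ^ 2) = 2 * √(1 - x ^ 2) := fun x => by
    rw [show 4 - (2 * x) ^ 2 = 2 ^ 2 * (1 - x ^ 2) by ring, sqrt_mul (by norm_num),
      sqrt_sq zero_le_two]
  simp only [hsqrt, intervalIntegral.integral_const_mul, integral_sqrt_one_sub_sq] at hscale
  norm_num at hscale
  linarith

section Stieltjes

variable {l x : ℝ}

lemma hasDerivAt_arcsin_half (hx : x ∈ Ioo (-2 : ℝ) 2) :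
    HasDerivAt (fun s => arcsin (s / 2)) (1 / √(4 - x ^ 2)) x := by
  have h4 : 0 < 4 - x ^ 2 := by nlinarith [hx.1, hx.2]
  have hne1 : x / 2 ≠ -1 := by intro h; linarith [hx.1]
  have hne2 : x / 2 ≠ 1 := by intro h; linarith [hx.2]
  have hsqrt : √(1 - (x / 2) ^ 2) = √(4 - x ^ 2) / 2 := by
    rw [show 1 - (x / 2) ^ 2 = (4 - x ^ 2) / 2 ^ 2 by ring, sqrt_div h4.le, sqrt_sq zero_le_two]
  refine ((hasDerivAt_arcsin hne1 hne2).comp x ((hasDerivAt_id x).div_const 2)).congr_deriv ?_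
  rw [hsqrt]
  field_simp

lemma hasDerivAt_arcsin_four_sub_mul_div (hl : 2 < l) (hx : x ∈ Ioo (-2 : ℝ) 2) :
    HasDerivAt (fun s => arcsin ((4 - l * s) / (2 * (l - s))))
      (-(√(l ^ 2 - 4) / (√(4 - x ^ 2) * (l - x)))) x := by
  have hlx : 0 < l - x := by linarith [hx.2]
  have hl4 : 0 < l ^ 2 - 4 := by nlinarith
  have h4 : 0 < 4 - x ^ 2 := by nlinarith [hx.1, hx.2]
  have hsq : 1 - ((4 - l * x) / (2 * (l - x))) ^ 2
      = (l ^ 2 - 4) * (4 - x ^ 2) / (2 * (l - x)) ^ 2 := by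
    field_simp; ring
  have hpos : 0 < 1 - ((4 - l * x) / (2 * (l - x))) ^ 2 := by rw [hsq]; positivity
  have hne1 : (4 - l * x) / (2 * (l - x)) ≠ -1 := by intro h; rw [h] at hpos; norm_num at hpos
  have hne2 : (4 - l * x) / (2 * (l - x)) ≠ 1 := by intro h; rw [h] at hpos; norm_num at hpos
  have hinner : HasDerivAt (fun s => (4 - l * s) / (2 * (l - s)))
      (-((l ^ 2 - 4) / (2 * (l - x) ^ 2))) x := by
    refine ((((hasDerivAt_id x).const_mul l).const_sub 4).div
      (((hasDerivAt_id x).const_sub l).const_mul 2) (mul_pos two_pos hlx).ne').congr_deriv ?_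
    simp only [id]
    field_simp
    ring
  refine ((hasDerivAt_arcsin hne1 hne2).comp x hinner).congr_deriv ?_
  rw [hsq, sqrt_div (by positivity), sqrt_mul hl4.le, sqrt_sq (by positivity)]
  have := sq_sqrt hl4.le
  field_simp
  linear_combination this

-- `√(4 - s²) / (l - s) = (l + s) / √(4 - s²) - (l² - 4) / ((l - s) √(4 - s²))`
lemma hasDerivAt_antideriv_sqrt_four_sub_sq_div_sub (hl : 2 < l) (hx : x ∈ Ioo (-2 : ℝ) 2) :
    HasDerivAt (fun s => l * arcsin (s / 2) - √(4 - s ^ 2)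
        + √(l ^ 2 - 4) * arcsin ((4 - l * s) / (2 * (l - s))))
      (√(4 - x ^ 2) / (l - x)) x := by
  have hlx : 0 < l - x := by linarith [hx.2]
  have h4 : 0 < 4 - x ^ 2 := by nlinarith [hx.1, hx.2]
  have hsqrt : HasDerivAt (fun s => √(4 - s ^ 2)) (-(2 * x) / (2 * √(4 - x ^ 2))) x :=
    (((hasDerivAt_pow 2 x).const_sub 4).congr_deriv (by ring)).sqrt h4.ne'
  refine ((((hasDerivAt_arcsin_half hx).const_mul l).sub hsqrt).add
    ((hasDerivAt_arcsin_four_sub_mul_div hl hx).const_mul _)).congr_deriv ?_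
  have hR := sq_sqrt (by nlinarith : (0 : ℝ) ≤ l ^ 2 - 4)
  have hQ := sq_sqrt h4.le
  field_simp
  linear_combination -hQ - hR

theorem integral_sqrt_four_sub_sq_div_sub (hl : 2 < l) :
    ∫ s in (-2 : ℝ)..2, √(4 - s ^ 2) / (l - s) = π * (l - √(l ^ 2 - 4)) := by
  have hden : ∀ s ∈ Icc (-2 : ℝ) 2, l - s ≠ 0 := fun s hs => by linarith [hs.2]
  rw [integral_eq_sub_of_hasDeriv_right_of_le (by norm_num) ?_
    (fun x hx => (hasDerivAt_antideriv_sqrt_four_sub_sq_div_sub hl hx).hasDerivWithinAt)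
    ((ContinuousOn.div (by fun_prop) (by fun_prop) hden).intervalIntegrable_of_Icc
      (by norm_num))]
  · have h2 : (4 - l * 2) / (2 * (l - 2)) = -1 := by
      rw [div_eq_iff (by linarith)]; ring
    have hm2 : (4 - l * -2) / (2 * (l - -2)) = 1 := by
      rw [div_eq_iff (by linarith)]; ring
    rw [h2, hm2]
    norm_num
    ring
  · refine ContinuousOn.add (by fun_prop) (continuousOn_const.mul
      (continuous_arcsin.comp_continuousOn (ContinuousOn.div (by fun_prop) (by fun_prop)
        fun s hs => mul_ne_zero two_ne_zero (hden s hs))))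

end Stieltjes

lemma sqrt_max_zero (x : ℝ) : √(max x 0) = √x := by
  rcases le_total x 0 with h | h
  · rw [max_eq_right h, sqrt_zero, sqrt_eq_zero'.2 h]
  · rw [max_eq_left h]

lemma V_abs (l : ℝ) : V |l| = V l := by rw [V, V, abs_abs]

lemma V_eq_integral_of_two_le {m : ℝ} (hm : 2 ≤ m) :
    V m = ∫ s in (2 : ℝ)..m, √(s ^ 2 - 4) := by
  have hint : ∀ a b : ℝ, IntervalIntegrable (fun s => √(s ^ 2 - 4)) volume a b :=
    fun a b => (by fun_prop : Continuous fun s : ℝ => √(s ^ 2 - 4)).intervalIntegrable a b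
  have hzero : ∫ s in (0 : ℝ)..2, √(s ^ 2 - 4) = 0 := by
    refine (integral_congr fun s hs => ?_).trans integral_zero
    rw [uIcc_of_le zero_le_two] at hs
    exact sqrt_eq_zero'.2 (by nlinarith [hs.1, hs.2])
  simp only [V, sqrt_max_zero, abs_of_nonneg (zero_le_two.trans hm)]
  rw [← integral_add_adjacent_intervals (hint 0 2) (hint 2 m), hzero, zero_add]

lemma V_pos {m : ℝ} (hm : 2 < m) : 0 < V m := by
  rw [V_eq_integral_of_two_le hm.le]
  refine intervalIntegral_pos_of_pos_on
    ((by fun_prop : Continuous fun s : ℝ => √(s ^ 2 - 4)).intervalIntegrable _ _)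
    (fun s hs => sqrt_pos.2 (by nlinarith [hs.1])) hm

lemma hasDerivAt_V_closedForm {x : ℝ} (hx : 2 < x) :
    HasDerivAt (fun s => s * √(s ^ 2 - 4) / 2 - 2 * log ((s + √(s ^ 2 - 4)) / 2))
      (√(x ^ 2 - 4)) x := by
  have h4 : 0 < x ^ 2 - 4 := by nlinarith
  have hR := sq_sqrt h4.le
  have hsqrt : HasDerivAt (fun s => √(s ^ 2 - 4)) (2 * x / (2 * √(x ^ 2 - 4))) x :=
    (((hasDerivAt_pow 2 x).sub_const 4).congr_deriv (by ring)).sqrt h4.ne'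
  have hlog := ((((hasDerivAt_id x).add hsqrt).div_const 2).log
    (by simp only [id, Pi.add_apply]; positivity)).const_mul 2
  refine ((((hasDerivAt_id x).mul hsqrt).div_const 2).sub hlog).congr_deriv ?_
  simp only [id, Pi.add_apply]
  field_simp
  linear_combination -(x + √(x ^ 2 - 4)) * hR

lemma V_eq_closedForm {m : ℝ} (hm : 2 ≤ m) :
    V m = m * √(m ^ 2 - 4) / 2 - 2 * log ((m + √(m ^ 2 - 4)) / 2) := by
  rw [V_eq_integral_of_two_le hm, integral_eq_sub_of_hasDeriv_right_of_le hm ?_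
    (fun x hx => (hasDerivAt_V_closedForm hx.1).hasDerivWithinAt)
    ((by fun_prop : Continuous fun s : ℝ => √(s ^ 2 - 4)).intervalIntegrable _ _)]
  · norm_num
  · refine ContinuousOn.sub (by fun_prop) (continuousOn_const.mul (ContinuousOn.log
      (by fun_prop) fun s hs => ?_))
    have := sqrt_nonneg (s ^ 2 - 4)
    linarith [hs.1]

lemma hasDerivAt_V {x : ℝ} (hx : 2 < x) : HasDerivAt V (√(x ^ 2 - 4)) x :=
  (hasDerivAt_V_closedForm hx).congr_of_eventuallyEq <|
    (eventually_gt_nhds hx).mono fun _ hs => V_eq_closedForm hs.le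

lemma tendsto_sq_div_four_sub_V_sub_log :
    Tendsto (fun x => x ^ 2 / 4 - V x / 2 - log x) atTop (𝓝 (1 / 2)) := by
  have hg : Tendsto (fun x : ℝ => √(1 - 4 / x ^ 2)) atTop (𝓝 1) := by
    have h := ((tendsto_const_nhds (x := (4 : ℝ))).div_atTop
      (tendsto_pow_atTop two_ne_zero)).const_sub 1
    simpa [Function.comp_def] using (continuous_sqrt.tendsto _).comp h
  have hlim : Tendsto
      (fun x : ℝ => 1 / (1 + √(1 - 4 / x ^ 2)) + log ((1 + √(1 - 4 / x ^ 2)) / 2))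
      atTop (𝓝 (1 / 2)) := by
    have h1 := hg.const_add 1
    have h2 := ((continuousAt_log (by norm_num : (1 + 1 : ℝ) / 2 ≠ 0)).tendsto.comp
      (h1.div_const 2))
    convert (h1.inv₀ (by norm_num)).add h2 using 2 <;> norm_num
  refine hlim.congr' ((eventually_gt_atTop 2).mono fun x hx => ?_)
  have hx0 : 0 < x := by linarith
  have h4 : 0 < x ^ 2 - 4 := by nlinarith
  have hR := sq_sqrt h4.le
  have hg_eq : √(1 - 4 / x ^ 2) = √(x ^ 2 - 4) / x := by
    rw [show 1 - 4 / x ^ 2 = (x ^ 2 - 4) / x ^ 2 by field_simp, sqrt_div h4.le, sqrt_sq hx0.le]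
  show _ = x ^ 2 / 4 - V x / 2 - log x
  rw [hg_eq, V_eq_closedForm hx.le,
    show (1 + √(x ^ 2 - 4) / x) / 2 = (x + √(x ^ 2 - 4)) / 2 / x by field_simp,
    log_div (by positivity) hx0.ne']
  field_simp
  linear_combination 4 * x * hR

noncomputable def semicircleDensity (s : ℝ) : ℝ := 1 / (2 * π) * √(4 - s ^ 2)

noncomputable def semicircleLogPotential (x : ℝ) : ℝ :=
  ∫ s in (-2 : ℝ)..2, log |x - s| * semicircleDensity s

lemma intervalIntegrable_semicircleDensity (a b : ℝ) :
    IntervalIntegrable semicircleDensity volume a b :=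
  (by unfold semicircleDensity; fun_prop : Continuous semicircleDensity).intervalIntegrable a b

lemma integral_semicircleDensity : ∫ s in (-2 : ℝ)..2, semicircleDensity s = 1 := by
  simp only [semicircleDensity, intervalIntegral.integral_const_mul, integral_sqrt_four_sub_sq]
  field_simp

lemma semicircleLogPotential_abs (x : ℝ) :
    semicircleLogPotential |x| = semicircleLogPotential x := by
  rcases le_total 0 x with hx | hx
  · rw [abs_of_nonneg hx]
  · have hneg := integral_comp_neg (a := -2) (b := 2)
      fun s => log |x - s| * semicircleDensity s
    rw [neg_neg] at hneg
    rw [abs_of_nonpos hx, semicircleLogPotential, semicircleLogPotential, ← hneg]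
    refine integral_congr fun s _ => ?_
    rw [semicircleDensity, semicircleDensity, neg_sq, ← abs_neg (-x - s)]
    ring_nf

lemma semicircleLogPotential_eq_of_two_lt {x : ℝ} (hx : 2 < x) :
    semicircleLogPotential x = ∫ s in (-2 : ℝ)..2, log (x - s) * semicircleDensity s := by
  refine integral_congr fun s hs => ?_
  rw [uIcc_of_le (by norm_num)] at hs
  rw [abs_of_pos (by linarith [hs.2])]

lemma hasDerivAt_semicircleLogPotential {x : ℝ} (hx : 2 < x) :
    HasDerivAt semicircleLogPotential ((x - √(x ^ 2 - 4)) / 2) x := by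
  have hderiv := hasDerivAt_integral_log_sub_mul (intervalIntegrable_semicircleDensity (-2) 2)
    (by norm_num) hx
  simp only [semicircleDensity, mul_div_assoc, intervalIntegral.integral_const_mul,
    integral_sqrt_four_sub_sq_div_sub hx] at hderiv
  refine (hderiv.congr_of_eventuallyEq ((eventually_gt_nhds hx).mono fun y hy =>
    semicircleLogPotential_eq_of_two_lt hy)).congr_deriv ?_
  field_simp

lemma tendsto_semicircleLogPotential_sub_log :
    Tendsto (fun x => semicircleLogPotential x - log x) atTop (𝓝 0) := by
  have h := tendsto_integral_log_sub_mul_sub_log (intervalIntegrable_semicircleDensity (-2) 2)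
    (by norm_num)
  rw [integral_semicircleDensity] at h
  refine h.congr' ((eventually_gt_atTop 2).mono fun x hx => ?_)
  show _ = semicircleLogPotential x - log x
  rw [semicircleLogPotential_eq_of_two_lt hx, one_mul]

theorem sq_div_four_sub_semicircleLogPotential {l : ℝ} (hl : 2 < |l|) :
    l ^ 2 / 4 - semicircleLogPotential l = V l / 2 + 1 / 2 := by
  let D := fun x => x ^ 2 / 4 - semicircleLogPotential x - V x / 2
  have hD : ∀ x ∈ Ioi 2, HasDerivAt D 0 x := fun x hx =>
    ((((hasDerivAt_pow 2 x).div_const 4).sub (hasDerivAt_semicircleLogPotential hx)).sub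
      ((hasDerivAt_V hx).div_const 2)).congr_deriv (by ring)
  have hlim : Tendsto D atTop (𝓝 (1 / 2)) := by
    simpa using (tendsto_sq_div_four_sub_V_sub_log.sub
      tendsto_semicircleLogPotential_sub_log).congr fun x => by ring
  have hDl : D |l| = 1 / 2 := eq_of_hasDerivAt_zero_of_tendsto_atTop hD hlim hl
  simp only [D] at hDl
  rw [← sq_abs l, ← semicircleLogPotential_abs, ← V_abs]
  linarith

theorem semicircle_log_potential_outside (l : ℝ) (hl : 2 < |l|) :
    (l ^ 2 / 4
        - ∫ s in (-2 : ℝ)..2, Real.log |l - s| * (1 / (2 * π) * Real.sqrt (4 - s ^ 2))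
      = 1 / 2 * V l + 1 / 2) ∧
    (l ^ 2 / 4
        - ∫ s in (-2 : ℝ)..2, Real.log |l - s| * (1 / (2 * π) * Real.sqrt (4 - s ^ 2))
      > 1 / 2) := by
  change l ^ 2 / 4 - semicircleLogPotential l = _ ∧ l ^ 2 / 4 - semicircleLogPotential l > _
  have hV : 0 < V l := V_abs l ▸ V_pos hl
  rw [sq_div_four_sub_semicircleLogPotential hl]
  constructor <;> linarith
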